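/- Let k ≥ 3 and d > d_k. Then φ_{d,k} is a contraction on the interval [p*, 1]: there exists a constant c ∈ [0,1) such that |φ_{d,k}(x) − φ_{d,k}(y)| ≤ c·|x − y| for all x, y ∈ [p*, 1]. -/

import Mathlib

open Real Set Filter

/-- Upper tail of the Poisson distribution with mean `lam`:
`P[Po(lam) ≥ m] = ∑_{j ≥ m} e^{-lam} lam^j / j!`. -/
noncomputable def poTail (lam : ℝ) (m : ℕ) : ℝ :=
  ∑' j : ℕ, if m ≤ j then Real.exp (-lam) * lam ^ j / (j.factorial : ℝ) else 0

/-- `f_k(λ) = λ / P[Po(λ) ≥ k-1]`. -/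
noncomputable def fPW (k : ℕ) (lam : ℝ) : ℝ := lam / poTail lam (k - 1)

/-- `d_k = inf { f_k(λ) : λ > 0 }`. -/
noncomputable def dPW (k : ℕ) : ℝ := sInf (fPW k '' Set.Ioi (0 : ℝ))

/-- `φ_{d,k}(p) = P[Po(dp) ≥ k-1]`. -/
noncomputable def phiPW (d : ℝ) (k : ℕ) (p : ℝ) : ℝ := poTail (d * p) (k - 1)

/-!
Write `ψ(x) = P[Po(x) ≥ k - 1]`, so that `φ(p) = ψ(d p)` and `φ'(p) = d ψ'(d p)` with
`ψ'(x) = P[Po(x) = k - 2]`. The excess `g(x) = ψ(x) - x ψ'(x)` is the numerator of the derivative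
of `x / ψ(x)`; since `g(0) = 0` and `g'(x) = ψ'(x) (x - (k - 2))`, once `g` is positive it stays
positive. As `d > d_k`, some `λ₀` has `λ₀ / ψ(λ₀) < d = λ* / ψ(λ*)` with `λ* = d p*`, and
`λ₀ < λ*` because `φ(p) ≤ p` on `[p*, 1]`. Hence `g` is positive somewhere below `λ*`, so on
`[λ*, ∞)`, and for `p ∈ [p*, 1]` this gives `d p ψ'(d p) < ψ(d p) = φ(p) ≤ p`, i.e. `φ'(p) < 1`.
The continuous `φ'` then has a maximum `c < 1` on `[p*, 1]`.
-/

lemma apply_le_self_of_fixedPoints_le {f : ℝ → ℝ} {p b x : ℝ} (hf : ContinuousOn f (Icc p b))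
    (hb : f b ≤ b) (hmax : ∀ y ∈ Icc p b, f y = y → y ≤ p) (hx : x ∈ Icc p b) : f x ≤ x := by
  by_contra! hlt
  obtain ⟨z, hz, hfz⟩ := intermediate_value_Icc' hx.2 ((hf.mono (Icc_subset_Icc_left hx.1)).sub
    continuousOn_id) ⟨sub_nonpos.2 hb, sub_nonneg.2 hlt.le⟩
  have hzx : z = x :=
    le_antisymm ((hmax z ⟨hx.1.trans hz.1, hz.2⟩ (sub_eq_zero.1 hfz)).trans hx.1) hz.1
  rw [hzx] at hfz
  exact hlt.ne (sub_eq_zero.1 hfz).symm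

lemma exists_contraction_of_hasDerivAt {f f' : ℝ → ℝ} {a b : ℝ}
    (hf : ∀ x ∈ Icc a b, HasDerivAt f (f' x) x) (hf' : ContinuousOn f' (Icc a b))
    (hlt : ∀ x ∈ Icc a b, |f' x| < 1) :
    ∃ c : ℝ, 0 ≤ c ∧ c < 1 ∧ ∀ x ∈ Icc a b, ∀ y ∈ Icc a b, |f x - f y| ≤ c * |x - y| := by
  rcases (Icc a b).eq_empty_or_nonempty with hempty | hne
  · exact ⟨0, le_rfl, zero_lt_one, by simp [hempty]⟩
  obtain ⟨q, hq, hmax⟩ := isCompact_Icc.exists_isMaxOn hne hf'.abs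
  refine ⟨|f' q|, abs_nonneg _, hlt q hq, fun x hx y hy => ?_⟩
  simpa only [Real.norm_eq_abs] using Convex.norm_image_sub_le_of_norm_hasDerivWithin_le
    (fun z hz => (hf z hz).hasDerivWithinAt) (fun z hz => hmax hz) (convex_Icc a b) hy hx

noncomputable def poissonTerm (lam : ℝ) (j : ℕ) : ℝ := exp (-lam) * lam ^ j / j.factorial

lemma poissonTerm_nonneg {x : ℝ} (hx : 0 ≤ x) (n : ℕ) : 0 ≤ poissonTerm x n := by
  unfold poissonTerm; positivity

noncomputable def expPartialSum (m : ℕ) (x : ℝ) : ℝ := ∑ j ∈ Finset.range m, x ^ j / j.factorial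

lemma hasSum_poissonTerm (lam : ℝ) : HasSum (poissonTerm lam) 1 := by
  have h := (NormedSpace.expSeries_div_hasSum_exp lam).mul_left (exp (-lam))
  rw [← Real.exp_eq_exp_ℝ, ← exp_add, neg_add_cancel, exp_zero] at h
  have hterm : poissonTerm lam = fun j => exp (-lam) * (lam ^ j / j.factorial) :=
    funext fun j => mul_div_assoc _ _ _
  rw [hterm]
  exact h

lemma poTail_eq_one_sub (lam : ℝ) (m : ℕ) :
    poTail lam m = 1 - exp (-lam) * expPartialSum m lam := by
  have hhead : HasSum (fun j => if j < m then poissonTerm lam j else 0)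
      (exp (-lam) * expPartialSum m lam) := by
    have h : HasSum (fun j => if j < m then poissonTerm lam j else 0)
        (∑ j ∈ Finset.range m, if j < m then poissonTerm lam j else 0) :=
      hasSum_sum_of_ne_finset_zero fun j hj => if_neg (by simpa using hj)
    rw [expPartialSum, Finset.mul_sum]
    convert h using 1
    exact Finset.sum_congr rfl fun j hj => by
      rw [if_pos (Finset.mem_range.1 hj), poissonTerm, mul_div_assoc]
  have htail : (fun j => poissonTerm lam j - if j < m then poissonTerm lam j else 0) =
      fun j => if m ≤ j then exp (-lam) * lam ^ j / j.factorial else 0 := by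
    ext j
    by_cases h : m ≤ j
    · simp [h, poissonTerm, not_lt.2 h]
    · simp [h, not_le.1 h]
  rw [poTail, ← htail, ((hasSum_poissonTerm lam).sub hhead).tsum_eq]

lemma expPartialSum_succ (m : ℕ) (x : ℝ) :
    expPartialSum (m + 1) x = expPartialSum m x + x ^ m / m.factorial :=
  Finset.sum_range_succ _ _

lemma hasDerivAt_expPartialSum_succ (m : ℕ) (x : ℝ) :
    HasDerivAt (expPartialSum (m + 1)) (expPartialSum m x) x := by
  induction m with
  | zero =>
    have : expPartialSum 1 = fun _ => 1 := by ext; simp [expPartialSum]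
    simpa [this, expPartialSum] using hasDerivAt_const x (1 : ℝ)
  | succ m ih =>
    have hpow : HasDerivAt (fun y : ℝ => y ^ (m + 1) / (m + 1).factorial)
        (x ^ m / m.factorial) x := by
      refine ((hasDerivAt_pow (m + 1) x).div_const _).congr_deriv ?_
      rw [Nat.factorial_succ]; push_cast; field_simp
    have hsplit : expPartialSum (m + 2) =
        fun y => expPartialSum (m + 1) y + y ^ (m + 1) / (m + 1).factorial :=
      funext (expPartialSum_succ (m + 1))
    rw [hsplit]
    refine (ih.add hpow).congr_deriv ?_
    exact (expPartialSum_succ m x).symm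

lemma hasDerivAt_poTail_succ (n : ℕ) (x : ℝ) :
    HasDerivAt (fun y => poTail y (n + 1)) (poissonTerm x n) x := by
  simp_rw [poTail_eq_one_sub]
  refine (((hasDerivAt_neg x).exp.mul (hasDerivAt_expPartialSum_succ n x)).const_sub 1).congr_deriv
    ?_
  rw [expPartialSum_succ, poissonTerm]
  ring

lemma expPartialSum_lt_exp {x : ℝ} (hx : 0 < x) (m : ℕ) : expPartialSum m x < exp x :=
  calc expPartialSum m x < expPartialSum m x + x ^ m / m.factorial := by
        have : 0 < x ^ m / m.factorial := by positivity
        linarith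
    _ = expPartialSum (m + 1) x := (expPartialSum_succ m x).symm
    _ ≤ exp x := Real.sum_le_exp_of_nonneg hx.le _

lemma poTail_pos {lam : ℝ} (hlam : 0 < lam) (m : ℕ) : 0 < poTail lam m := by
  rw [poTail_eq_one_sub, sub_pos, exp_neg, inv_mul_lt_one₀ (exp_pos lam)]
  exact expPartialSum_lt_exp hlam m

lemma poTail_le_one {lam : ℝ} (hlam : 0 ≤ lam) (m : ℕ) : poTail lam m ≤ 1 := by
  rw [poTail_eq_one_sub, sub_le_self_iff]
  unfold expPartialSum
  positivity

lemma poTail_zero_succ (n : ℕ) : poTail 0 (n + 1) = 0 := by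
  simp [poTail_eq_one_sub, expPartialSum, Finset.sum_range_succ']

noncomputable def tailExcess (n : ℕ) (x : ℝ) : ℝ := poTail x (n + 1) - x * poissonTerm x n

lemma hasDerivAt_tailExcess (n : ℕ) (x : ℝ) :
    HasDerivAt (tailExcess n) (poissonTerm x n * (x - n)) x := by
  have hexcess :
      tailExcess n = fun y => poTail y (n + 1) - exp (-y) * y ^ (n + 1) / n.factorial := by
    ext y; rw [tailExcess, poissonTerm, pow_succ]; ring
  rw [hexcess]
  refine ((hasDerivAt_poTail_succ n x).sub
    (((hasDerivAt_neg x).exp.mul (hasDerivAt_pow (n + 1) x)).div_const _)).congr_deriv ?_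
  simp only [poissonTerm, Nat.add_sub_cancel, Nat.cast_add, Nat.cast_one]
  ring

lemma continuous_tailExcess (n : ℕ) : Continuous (tailExcess n) :=
  continuous_iff_continuousAt.2 fun x => (hasDerivAt_tailExcess n x).continuousAt

lemma tailExcess_nonpos {n : ℕ} {x : ℝ} (hx₀ : 0 ≤ x) (hxn : x ≤ n) : tailExcess n x ≤ 0 := by
  have hanti : AntitoneOn (tailExcess n) (Icc 0 n) := by
    refine antitoneOn_of_hasDerivWithinAt_nonpos (convex_Icc _ _)
      (continuous_tailExcess n).continuousOn
      (fun y _ => (hasDerivAt_tailExcess n y).hasDerivWithinAt) fun y hy => ?_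
    rw [interior_Icc] at hy
    exact mul_nonpos_of_nonneg_of_nonpos (poissonTerm_nonneg hy.1.le n)
      (by linarith [hy.2])
  simpa [tailExcess, poTail_zero_succ] using hanti (left_mem_Icc.2 (by positivity)) ⟨hx₀, hxn⟩ hx₀

lemma monotoneOn_tailExcess (n : ℕ) : MonotoneOn (tailExcess n) (Ici n) := by
  refine monotoneOn_of_hasDerivWithinAt_nonneg (convex_Ici _)
    (continuous_tailExcess n).continuousOn
    (fun y _ => (hasDerivAt_tailExcess n y).hasDerivWithinAt) fun y hy => ?_
  rw [interior_Ici] at hy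
  have hy₀ : 0 < y := lt_of_le_of_lt n.cast_nonneg hy
  exact mul_nonneg (poissonTerm_nonneg hy₀.le n) (by linarith [mem_Ioi.1 hy])

lemma hasDerivAt_div_poTail {n : ℕ} {x : ℝ} (hx : 0 < x) :
    HasDerivAt (fun y => y / poTail y (n + 1)) (tailExcess n x / poTail x (n + 1) ^ 2) x := by
  refine ((hasDerivAt_id x).div (hasDerivAt_poTail_succ n x) (poTail_pos hx _).ne').congr_deriv ?_
  rw [tailExcess, id, one_mul]

lemma tailExcess_pos_of_div_poTail_lt {n : ℕ} {a b x : ℝ} (ha : 0 < a) (hab : a < b)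
    (hf : a / poTail a (n + 1) < b / poTail b (n + 1)) (hbx : b ≤ x) : 0 < tailExcess n x := by
  obtain ⟨ξ, hξ, hslope⟩ := exists_hasDerivAt_eq_slope (fun y => y / poTail y (n + 1))
    (fun y => tailExcess n y / poTail y (n + 1) ^ 2) hab
    (fun y hy => (hasDerivAt_div_poTail (ha.trans_le hy.1)).continuousAt.continuousWithinAt)
    (fun y hy => hasDerivAt_div_poTail (ha.trans hy.1))
  have hξ₀ : 0 < ξ := ha.trans hξ.1
  have hpos : 0 < tailExcess n ξ := by
    have : 0 < tailExcess n ξ / poTail ξ (n + 1) ^ 2 :=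
      hslope ▸ div_pos (sub_pos.2 hf) (sub_pos.2 hab)
    exact (div_pos_iff_of_pos_right (pow_pos (poTail_pos hξ₀ _) 2)).1 this
  have hnξ : (n : ℝ) ≤ ξ := by
    by_contra! h
    exact (tailExcess_nonpos hξ₀.le h.le).not_gt hpos
  exact hpos.trans_le (monotoneOn_tailExcess n hnξ (hnξ.trans (hξ.2.le.trans hbx))
    (hξ.2.le.trans hbx))

lemma mul_poissonTerm_lt_one {n : ℕ} {d p : ℝ} (hp : 0 < p)
    (hexcess : 0 < tailExcess n (d * p)) (hle : poTail (d * p) (n + 1) ≤ p) :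
    d * poissonTerm (d * p) n < 1 := by
  rw [tailExcess] at hexcess
  have : d * poissonTerm (d * p) n * p < 1 * p := by linarith
  exact lt_of_mul_lt_mul_right this hp.le

lemma dPW_nonneg (k : ℕ) : 0 ≤ dPW k :=
  Real.sInf_nonneg <| by
    rintro _ ⟨lam, hlam, rfl⟩
    exact div_nonneg hlam.le (poTail_pos hlam _).le

lemma lt_mul_of_fPW_lt {n : ℕ} {d pstar lam : ℝ} (hd : 0 < d) (hlam : 0 < lam)
    (hf : fPW (n + 2) lam < d) (hle : ∀ p ∈ Icc pstar 1, phiPW d (n + 2) p ≤ p) :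
    lam < d * pstar := by
  have hφ : phiPW d (n + 2) (lam / d) = poTail lam (n + 1) := by
    rw [phiPW, mul_div_cancel₀ _ hd.ne']; rfl
  have hgt : lam / d < phiPW d (n + 2) (lam / d) := by
    rw [hφ, div_lt_iff₀ hd, mul_comm]
    exact (div_lt_iff₀ (poTail_pos hlam _)).1 hf
  have hp₀ : lam / d < pstar := by
    by_contra! h
    exact (hle _ ⟨h, hgt.le.trans (hφ ▸ poTail_le_one hlam.le _)⟩).not_gt hgt
  rwa [div_lt_iff₀' hd] at hp₀

theorem stmt_5 (k : ℕ) (hk : 3 ≤ k) (d : ℝ) (hd : dPW k < d)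
    (pstar : ℝ) (hp_mem : pstar ∈ Set.Icc (0 : ℝ) 1) (hp_fix : phiPW d k pstar = pstar)
    (hp_max : ∀ p ∈ Set.Icc (0 : ℝ) 1, phiPW d k p = p → p ≤ pstar) :
    ∃ c : ℝ, 0 ≤ c ∧ c < 1 ∧
      ∀ x ∈ Set.Icc pstar 1, ∀ y ∈ Set.Icc pstar 1,
        |phiPW d k x - phiPW d k y| ≤ c * |x - y| := by
  obtain ⟨n, rfl⟩ : ∃ n, k = n + 2 := ⟨k - 2, by omega⟩
  have hd₀ : 0 < d := (dPW_nonneg _).trans_lt hd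
  have hderiv (p : ℝ) : HasDerivAt (phiPW d (n + 2)) (d * poissonTerm (d * p) n) p := by
    have h := (hasDerivAt_poTail_succ n (d * p)).comp p ((hasDerivAt_id' p).const_mul d)
    rwa [mul_one, mul_comm] at h
  have hle : ∀ p ∈ Icc pstar 1, phiPW d (n + 2) p ≤ p := fun p =>
    apply_le_self_of_fixedPoints_le
      (continuous_iff_continuousAt.2 fun p => (hderiv p).continuousAt).continuousOn
      (poTail_le_one (by simpa using hd₀.le) _) fun y hy => hp_max y ⟨hp_mem.1.trans hy.1, hy.2⟩
  obtain ⟨_, ⟨lam, hlam, rfl⟩, hlam_lt⟩ :=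
    exists_lt_of_csInf_lt ⟨_, mem_image_of_mem (fPW (n + 2)) (mem_Ioi.2 one_pos)⟩ hd
  have hlt : lam < d * pstar := lt_mul_of_fPW_lt hd₀ hlam hlam_lt hle
  have hpstar : 0 < pstar := (mul_pos_iff_of_pos_left hd₀).1 (hlam.trans hlt)
  have hfixed : fPW (n + 2) (d * pstar) = d := by
    change d * pstar / phiPW d (n + 2) pstar = d
    rw [hp_fix, mul_div_cancel_right₀ _ hpstar.ne']
  refine exists_contraction_of_hasDerivAt (fun p _ => hderiv p)
    (by unfold poissonTerm; fun_prop) fun p hp => ?_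
  have hp₀ : 0 < p := hpstar.trans_le hp.1
  rw [abs_of_nonneg (mul_nonneg hd₀.le (poissonTerm_nonneg (by positivity) n))]
  exact mul_poissonTerm_lt_one hp₀
    (tailExcess_pos_of_div_poTail_lt hlam hlt (hlam_lt.trans_eq hfixed.symm)
      (mul_le_mul_of_nonneg_left hp.1 hd₀.le)) (hle p hp)
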